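/- arXiv:2307.08196 — 2 statements merged into one kernel-verified Lean document; each statement's English description precedes it below -/
import Mathlib

section
/- Let u : ℝ × ℝ → ℝ be a smooth function. Then u satisfies the SK equation at every point (x,t) if and only if the zero-curvature equation ∂_t L − ∂_x Z + L·Z − Z·L = 0 holds for every (x,t) ∈ ℝ² and every spectral parameter k ∈ ℂ. -/
/-- Partial derivative in the first (space) variable. -/
noncomputable def pdx (u : ℝ × ℝ → ℝ) : ℝ × ℝ → ℝ :=
  fun p => deriv (fun x => u (x, p.2)) p.1

/-- Partial derivative in the second (time) variable. -/
noncomputable def pdt (u : ℝ × ℝ → ℝ) : ℝ × ℝ → ℝ :=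
  fun p => deriv (fun t => u (p.1, t)) p.2

/-- Entrywise partial derivative in `x` of a matrix-valued function. -/
noncomputable def mDx (A : ℝ × ℝ → ℂ → Matrix (Fin 3) (Fin 3) ℂ) :
    ℝ × ℝ → ℂ → Matrix (Fin 3) (Fin 3) ℂ :=
  fun p k => Matrix.of fun i j => deriv (fun x => A (x, p.2) k i j) p.1

/-- Entrywise partial derivative in `t` of a matrix-valued function. -/
noncomputable def mDt (A : ℝ × ℝ → ℂ → Matrix (Fin 3) (Fin 3) ℂ) :
    ℝ × ℝ → ℂ → Matrix (Fin 3) (Fin 3) ℂ :=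
  fun p k => Matrix.of fun i j => deriv (fun t => A (p.1, t) k i j) p.2

/-- The spatial Lax matrix `L` of the Sawada–Kotera equation. -/
noncomputable def LaxL (u : ℝ × ℝ → ℝ) (p : ℝ × ℝ) (k : ℂ) : Matrix (Fin 3) (Fin 3) ℂ :=
  !![0, 1, 0;
     0, 0, 1;
     k ^ 3, -6 * (u p : ℂ), 0]

/-- The temporal Lax matrix `Z` of the Sawada–Kotera equation. -/
noncomputable def LaxZ (u : ℝ × ℝ → ℝ) (p : ℝ × ℝ) (k : ℂ) : Matrix (Fin 3) (Fin 3) ℂ :=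
  !![36 * k ^ 3 * (u p : ℂ),
     6 * (pdx^[2] u p : ℂ) - 36 * (u p : ℂ) ^ 2,
     9 * k ^ 3 - 18 * (pdx u p : ℂ);
     18 * k ^ 3 * (pdx u p : ℂ) + 9 * k ^ 6,
     6 * (pdx^[3] u p : ℂ) - 18 * k ^ 3 * (u p : ℂ) + 36 * (u p : ℂ) * (pdx u p : ℂ),
     -12 * (pdx^[2] u p : ℂ) - 36 * (u p : ℂ) ^ 2;
     6 * k ^ 3 * (pdx^[2] u p : ℂ) - 36 * (u p : ℂ) ^ 2 * k ^ 3,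
     36 * (pdx u p : ℂ) ^ 2 + 108 * (u p : ℂ) * (pdx^[2] u p : ℂ) + 9 * k ^ 6
       + 216 * (u p : ℂ) ^ 3 + 6 * (pdx^[4] u p : ℂ),
     -6 * (pdx^[3] u p : ℂ) - 18 * k ^ 3 * (u p : ℂ) - 36 * (u p : ℂ) * (pdx u p : ℂ)]

lemma pdx_eq_fderiv {u : ℝ × ℝ → ℝ} (hu : ContDiff ℝ (⊤ : ℕ∞) u) (p : ℝ × ℝ) :
    pdx u p = fderiv ℝ u p ((1 : ℝ), (0 : ℝ)) := by
  have h1 : HasDerivAt (fun x : ℝ => (x, p.2)) ((1:ℝ), (0:ℝ)) p.1 :=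
    (hasDerivAt_id p.1).prodMk (hasDerivAt_const p.1 p.2)
  have h2 : HasDerivAt (fun x : ℝ => u (x, p.2)) (fderiv ℝ u p ((1:ℝ),(0:ℝ))) p.1 := by
    have := ((hu.differentiable (by simp)) (p.1, p.2)).hasFDerivAt.comp_hasDerivAt p.1 h1
    exact this
  exact h2.deriv

lemma contDiff_pdx {u : ℝ × ℝ → ℝ} (hu : ContDiff ℝ (⊤ : ℕ∞) u) : ContDiff ℝ (⊤ : ℕ∞) (pdx u) := by
  have h : pdx u = fun p => fderiv ℝ u p ((1:ℝ),(0:ℝ)) := funext (pdx_eq_fderiv hu)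
  rw [h]
  exact (hu.fderiv_right (m := (⊤ : ℕ∞)) (by simp)).clm_apply contDiff_const

lemma contDiff_pdx_iter {u : ℝ × ℝ → ℝ} (hu : ContDiff ℝ (⊤ : ℕ∞) u) (n : ℕ) :
    ContDiff ℝ (⊤ : ℕ∞) (pdx^[n] u) := by
  induction n with
  | zero => exact hu
  | succ n ih =>
    rw [Function.iterate_succ_apply']
    exact contDiff_pdx ih

lemma hasDerivAt_pdx_iter {u : ℝ × ℝ → ℝ} (hu : ContDiff ℝ (⊤ : ℕ∞) u) (n : ℕ) (p : ℝ × ℝ) :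
    HasDerivAt (fun x' => pdx^[n] u (x', p.2)) (pdx^[n+1] u p) p.1 := by
  have hd : DifferentiableAt ℝ (fun x' => pdx^[n] u (x', p.2)) p.1 := by
    have h := (contDiff_pdx_iter hu n).differentiable (by simp)
    exact (h.comp (differentiable_id.prodMk (differentiable_const _))).differentiableAt
  rw [Function.iterate_succ_apply']
  exact hd.hasDerivAt

lemma hasDerivAt_pdt {u : ℝ × ℝ → ℝ} (hu : ContDiff ℝ (⊤ : ℕ∞) u) (p : ℝ × ℝ) :
    HasDerivAt (fun t => u (p.1, t)) (pdt u p) p.2 := by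
  have hd : DifferentiableAt ℝ (fun t => u (p.1, t)) p.2 :=
    ((hu.differentiable (by simp)).comp
      ((differentiable_const _).prodMk differentiable_id)).differentiableAt
  exact hd.hasDerivAt

lemma mDt_LaxL {u : ℝ × ℝ → ℝ} (hu : ContDiff ℝ (⊤ : ℕ∞) u) (p : ℝ × ℝ) (k : ℂ) :
    mDt (LaxL u) p k = !![0, 0, 0; 0, 0, 0; 0, -6 * (pdt u p : ℂ), 0] := by
  have HT : HasDerivAt (fun t : ℝ => ((u (p.1, t) : ℝ) : ℂ)) ((pdt u p : ℝ) : ℂ) p.2 :=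
    (hasDerivAt_pdt hu p).ofReal_comp
  ext i j
  fin_cases i <;> fin_cases j <;>
    simp only [mDt, LaxL, Matrix.of_apply, Fin.zero_eta, Fin.mk_one, Matrix.cons_val',
      Matrix.cons_val_zero, Matrix.cons_val_one, Matrix.head_cons, Matrix.empty_val',
      Matrix.cons_val_fin_one, Matrix.head_fin_const, Matrix.cons_val_two, Matrix.tail_cons,
      Fin.reduceFinMk, Fin.isValue]
  · exact deriv_const p.2 0
  · exact deriv_const p.2 1
  · exact deriv_const p.2 0
  · exact deriv_const p.2 0
  · exact deriv_const p.2 0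
  · exact deriv_const p.2 1
  · exact deriv_const p.2 (k ^ 3)
  · exact (HT.const_mul (-6 : ℂ)).deriv
  · exact deriv_const p.2 0

lemma mDx_LaxZ {u : ℝ × ℝ → ℝ} (hu : ContDiff ℝ (⊤ : ℕ∞) u) (p : ℝ × ℝ) (k : ℂ) :
    mDx (LaxZ u) p k =
    !![36 * k ^ 3 * (pdx u p : ℂ),
       6 * (pdx^[3] u p : ℂ) - 72 * (u p : ℂ) * (pdx u p : ℂ),
       -18 * (pdx^[2] u p : ℂ);
       18 * k ^ 3 * (pdx^[2] u p : ℂ),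
       6 * (pdx^[4] u p : ℂ) - 18 * k ^ 3 * (pdx u p : ℂ)
         + 36 * (pdx u p : ℂ) ^ 2 + 36 * (u p : ℂ) * (pdx^[2] u p : ℂ),
       -12 * (pdx^[3] u p : ℂ) - 72 * (u p : ℂ) * (pdx u p : ℂ);
       6 * k ^ 3 * (pdx^[3] u p : ℂ) - 72 * (u p : ℂ) * (pdx u p : ℂ) * k ^ 3,
       180 * (pdx u p : ℂ) * (pdx^[2] u p : ℂ) + 108 * (u p : ℂ) * (pdx^[3] u p : ℂ)
         + 648 * (u p : ℂ) ^ 2 * (pdx u p : ℂ) + 6 * (pdx^[5] u p : ℂ),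
       -6 * (pdx^[4] u p : ℂ) - 18 * k ^ 3 * (pdx u p : ℂ)
         - 36 * (pdx u p : ℂ) ^ 2 - 36 * (u p : ℂ) * (pdx^[2] u p : ℂ)] := by
  have H : ∀ n : ℕ, HasDerivAt (fun x' : ℝ => ((pdx^[n] u (x', p.2) : ℝ) : ℂ))
      ((pdx^[n+1] u p : ℝ) : ℂ) p.1 := fun n => (hasDerivAt_pdx_iter hu n p).ofReal_comp
  have H0 : HasDerivAt (fun x' : ℝ => ((u (x', p.2) : ℝ) : ℂ)) ((pdx u p : ℝ) : ℂ) p.1 := H 0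
  have H1 : HasDerivAt (fun x' : ℝ => ((pdx u (x', p.2) : ℝ) : ℂ))
      ((pdx^[2] u p : ℝ) : ℂ) p.1 := H 1
  have H2 : HasDerivAt (fun x' : ℝ => ((pdx^[2] u (x', p.2) : ℝ) : ℂ))
      ((pdx^[3] u p : ℝ) : ℂ) p.1 := H 2
  have H3 : HasDerivAt (fun x' : ℝ => ((pdx^[3] u (x', p.2) : ℝ) : ℂ))
      ((pdx^[4] u p : ℝ) : ℂ) p.1 := H 3
  have H4 : HasDerivAt (fun x' : ℝ => ((pdx^[4] u (x', p.2) : ℝ) : ℂ))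
      ((pdx^[5] u p : ℝ) : ℂ) p.1 := H 4
  have Hsq : HasDerivAt (fun x' : ℝ => ((u (x', p.2) : ℝ) : ℂ) ^ 2)
      (2 * ((u p : ℝ) : ℂ) * ((pdx u p : ℝ) : ℂ)) p.1 := by
    have e : (fun x' : ℝ => ((u (x', p.2) : ℝ) : ℂ) ^ 2)
        = fun x' : ℝ => ((u (x', p.2) : ℝ) : ℂ) * ((u (x', p.2) : ℝ) : ℂ) := by
      funext x'; ring
    rw [e]
    have h := H0.mul H0
    exact h.congr_deriv (by ring)
  have Hcu : HasDerivAt (fun x' : ℝ => ((u (x', p.2) : ℝ) : ℂ) ^ 3)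
      (3 * ((u p : ℝ) : ℂ) ^ 2 * ((pdx u p : ℝ) : ℂ)) p.1 := by
    have e : (fun x' : ℝ => ((u (x', p.2) : ℝ) : ℂ) ^ 3)
        = fun x' : ℝ => ((u (x', p.2) : ℝ) : ℂ) * ((u (x', p.2) : ℝ) : ℂ)
          * ((u (x', p.2) : ℝ) : ℂ) := by
      funext x'; ring
    rw [e]
    have h := (H0.mul H0).mul H0
    exact h.congr_deriv (by simp only [Pi.mul_apply]; ring)
  have H1sq : HasDerivAt (fun x' : ℝ => ((pdx u (x', p.2) : ℝ) : ℂ) ^ 2)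
      (2 * ((pdx u p : ℝ) : ℂ) * ((pdx^[2] u p : ℝ) : ℂ)) p.1 := by
    have e : (fun x' : ℝ => ((pdx u (x', p.2) : ℝ) : ℂ) ^ 2)
        = fun x' : ℝ => ((pdx u (x', p.2) : ℝ) : ℂ) * ((pdx u (x', p.2) : ℝ) : ℂ) := by
      funext x'; ring
    rw [e]
    have h := H1.mul H1
    exact h.congr_deriv (by ring)
  have D00 : HasDerivAt (fun x' : ℝ => 36 * k ^ 3 * ((u (x', p.2) : ℝ) : ℂ))
      (36 * k ^ 3 * ((pdx u p : ℝ) : ℂ)) p.1 := by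
    have h := H0.const_mul (36 * k ^ 3)
    convert h using 1
    all_goals ring
  have D01 : HasDerivAt
      (fun x' : ℝ => 6 * ((pdx^[2] u (x', p.2) : ℝ) : ℂ) - 36 * ((u (x', p.2) : ℝ) : ℂ) ^ 2)
      (6 * ((pdx^[3] u p : ℝ) : ℂ) - 72 * ((u p : ℝ) : ℂ) * ((pdx u p : ℝ) : ℂ)) p.1 := by
    have h := (H2.const_mul (6 : ℂ)).sub (Hsq.const_mul (36 : ℂ))
    exact h.congr_deriv (by ring)
  have D02 : HasDerivAt
      (fun x' : ℝ => 9 * k ^ 3 - 18 * ((pdx u (x', p.2) : ℝ) : ℂ))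
      (-18 * ((pdx^[2] u p : ℝ) : ℂ)) p.1 := by
    have h := (hasDerivAt_const p.1 (9 * k ^ 3)).sub (H1.const_mul (18 : ℂ))
    exact h.congr_deriv (by ring)
  have D10 : HasDerivAt
      (fun x' : ℝ => 18 * k ^ 3 * ((pdx u (x', p.2) : ℝ) : ℂ) + 9 * k ^ 6)
      (18 * k ^ 3 * ((pdx^[2] u p : ℝ) : ℂ)) p.1 := by
    have h := (H1.const_mul (18 * k ^ 3)).add_const (9 * k ^ 6)
    convert h using 1
    all_goals ring
  have D11 : HasDerivAt
      (fun x' : ℝ => 6 * ((pdx^[3] u (x', p.2) : ℝ) : ℂ) - 18 * k ^ 3 * ((u (x', p.2) : ℝ) : ℂ)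
        + 36 * ((u (x', p.2) : ℝ) : ℂ) * ((pdx u (x', p.2) : ℝ) : ℂ))
      (6 * ((pdx^[4] u p : ℝ) : ℂ) - 18 * k ^ 3 * ((pdx u p : ℝ) : ℂ)
        + 36 * ((pdx u p : ℝ) : ℂ) ^ 2 + 36 * ((u p : ℝ) : ℂ) * ((pdx^[2] u p : ℝ) : ℂ)) p.1 := by
    have h := ((H3.const_mul (6 : ℂ)).sub (H0.const_mul (18 * k ^ 3))).add
      ((H0.const_mul (36 : ℂ)).mul H1)
    exact h.congr_deriv (by ring)
  have D12 : HasDerivAt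
      (fun x' : ℝ => -12 * ((pdx^[2] u (x', p.2) : ℝ) : ℂ) - 36 * ((u (x', p.2) : ℝ) : ℂ) ^ 2)
      (-12 * ((pdx^[3] u p : ℝ) : ℂ) - 72 * ((u p : ℝ) : ℂ) * ((pdx u p : ℝ) : ℂ)) p.1 := by
    have h := (H2.const_mul (-12 : ℂ)).sub (Hsq.const_mul (36 : ℂ))
    exact h.congr_deriv (by ring)
  have D20 : HasDerivAt
      (fun x' : ℝ => 6 * k ^ 3 * ((pdx^[2] u (x', p.2) : ℝ) : ℂ)
        - 36 * ((u (x', p.2) : ℝ) : ℂ) ^ 2 * k ^ 3)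
      (6 * k ^ 3 * ((pdx^[3] u p : ℝ) : ℂ)
        - 72 * ((u p : ℝ) : ℂ) * ((pdx u p : ℝ) : ℂ) * k ^ 3) p.1 := by
    have h := (H2.const_mul (6 * k ^ 3)).sub ((Hsq.const_mul (36 : ℂ)).mul_const (k ^ 3))
    exact h.congr_deriv (by ring)
  have D21 : HasDerivAt
      (fun x' : ℝ => 36 * ((pdx u (x', p.2) : ℝ) : ℂ) ^ 2
        + 108 * ((u (x', p.2) : ℝ) : ℂ) * ((pdx^[2] u (x', p.2) : ℝ) : ℂ) + 9 * k ^ 6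
        + 216 * ((u (x', p.2) : ℝ) : ℂ) ^ 3 + 6 * ((pdx^[4] u (x', p.2) : ℝ) : ℂ))
      (180 * ((pdx u p : ℝ) : ℂ) * ((pdx^[2] u p : ℝ) : ℂ)
        + 108 * ((u p : ℝ) : ℂ) * ((pdx^[3] u p : ℝ) : ℂ)
        + 648 * ((u p : ℝ) : ℂ) ^ 2 * ((pdx u p : ℝ) : ℂ)
        + 6 * ((pdx^[5] u p : ℝ) : ℂ)) p.1 := by
    have hA := (H1sq.const_mul (36 : ℂ)).add ((H0.const_mul (108 : ℂ)).mul H2)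
    have hB := hA.add_const (9 * k ^ 6)
    have hC := hB.add (Hcu.const_mul (216 : ℂ))
    have h := hC.add (H4.const_mul (6 : ℂ))
    exact h.congr_deriv (by ring)
  have D22 : HasDerivAt
      (fun x' : ℝ => -6 * ((pdx^[3] u (x', p.2) : ℝ) : ℂ) - 18 * k ^ 3 * ((u (x', p.2) : ℝ) : ℂ)
        - 36 * ((u (x', p.2) : ℝ) : ℂ) * ((pdx u (x', p.2) : ℝ) : ℂ))
      (-6 * ((pdx^[4] u p : ℝ) : ℂ) - 18 * k ^ 3 * ((pdx u p : ℝ) : ℂ)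
        - 36 * ((pdx u p : ℝ) : ℂ) ^ 2 - 36 * ((u p : ℝ) : ℂ) * ((pdx^[2] u p : ℝ) : ℂ)) p.1 := by
    have h := ((H3.const_mul (-6 : ℂ)).sub (H0.const_mul (18 * k ^ 3))).sub
      ((H0.const_mul (36 : ℂ)).mul H1)
    exact h.congr_deriv (by ring)
  ext i j
  fin_cases i <;> fin_cases j <;>
    simp only [mDx, LaxZ, Matrix.of_apply, Fin.zero_eta, Fin.mk_one, Matrix.cons_val',
      Matrix.cons_val_zero, Matrix.cons_val_one, Matrix.head_cons, Matrix.empty_val',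
      Matrix.cons_val_fin_one, Matrix.head_fin_const, Matrix.cons_val_two, Matrix.tail_cons,
      Fin.reduceFinMk, Fin.isValue]
  · exact D00.deriv
  · exact D01.deriv
  · exact D02.deriv
  · exact D10.deriv
  · exact D11.deriv
  · exact D12.deriv
  · exact D20.deriv
  · exact D21.deriv
  · exact D22.deriv

/-- A smooth `u` satisfies the Sawada–Kotera equation iff the zero-curvature equation
`∂ₜL − ∂ₓZ + L·Z − Z·L = 0` holds for all `(x,t)` and all spectral parameters `k`. -/
theorem sk_iff_zero_curvature (u : ℝ × ℝ → ℝ) (hu : ContDiff ℝ (⊤ : ℕ∞) u) :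
    (∀ p : ℝ × ℝ,
        pdt u p + pdx^[5] u p
          + 30 * (u p * pdx^[3] u p + pdx u p * pdx^[2] u p)
          + 180 * (u p) ^ 2 * pdx u p = 0)
      ↔
    (∀ (p : ℝ × ℝ) (k : ℂ),
        mDt (LaxL u) p k - mDx (LaxZ u) p k
          + LaxL u p k * LaxZ u p k - LaxZ u p k * LaxL u p k = 0) := by
  constructor
  · intro hSK p k
    have hC : ((pdt u p : ℝ) : ℂ) + (pdx^[5] u p : ℂ)
        + 30 * ((u p : ℂ) * (pdx^[3] u p : ℂ) + (pdx u p : ℂ) * (pdx^[2] u p : ℂ))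
        + 180 * (u p : ℂ) ^ 2 * (pdx u p : ℂ) = 0 := by
      exact_mod_cast congrArg (Complex.ofReal) (hSK p)
    rw [mDt_LaxL hu, mDx_LaxZ hu]
    ext i j
    fin_cases i <;> fin_cases j <;>
      simp only [LaxL, LaxZ, Matrix.of_apply, Matrix.sub_apply, Matrix.add_apply,
        Matrix.mul_apply, Fin.sum_univ_three, Matrix.zero_apply, Fin.zero_eta, Fin.mk_one,
        Matrix.cons_val', Matrix.cons_val_zero, Matrix.cons_val_one, Matrix.head_cons,
        Matrix.empty_val', Matrix.cons_val_fin_one, Matrix.head_fin_const, Matrix.cons_val_two,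
        Matrix.tail_cons, Fin.reduceFinMk, Fin.isValue]
    · ring
    · ring
    · ring
    · ring
    · ring
    · ring
    · ring
    · linear_combination (-6 : ℂ) * hC
    · ring
  · intro h p
    have hk := h p 0
    rw [mDt_LaxL hu, mDx_LaxZ hu] at hk
    have h21 := congrFun (congrFun hk 2) 1
    simp only [LaxL, LaxZ, Matrix.of_apply, Matrix.sub_apply, Matrix.add_apply,
      Matrix.mul_apply, Fin.sum_univ_three, Matrix.zero_apply, Fin.zero_eta, Fin.mk_one,
      Matrix.cons_val', Matrix.cons_val_zero, Matrix.cons_val_one, Matrix.head_cons,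
      Matrix.empty_val', Matrix.cons_val_fin_one, Matrix.head_fin_const, Matrix.cons_val_two,
      Matrix.tail_cons, Fin.reduceFinMk, Fin.isValue] at h21
    have key : ((pdt u p + pdx^[5] u p
        + 30 * (u p * pdx^[3] u p + pdx u p * pdx^[2] u p)
        + 180 * (u p) ^ 2 * pdx u p : ℝ) : ℂ) = 0 := by
      push_cast
      linear_combination (-1/6 : ℂ) * h21
    exact_mod_cast key
end

section
/- Let α = e^{2πi/3}, and for k ∈ ℂ with k ≠ 0 and arbitrary p, q ∈ ℂ define the 3×3 complex matrices G = [[α, α^2, 1],[α^2 k, α k, k],[k^2, k^2, k^2]], L = [[0,1,0],[0,0,1],[k^3 − q, −p, 0]], Λ = diag(α, α^2, 1), Q₁ = −(p/3)·[[α^2, α, 1],[α^2, α, 1],[α^2, α, 1]], and Q₂ = −(q/3)·[[α, α^2, 1],[α, α^2, 1],[α, α^2, 1]]. Then det G = −3√3·i·k^3 (so G is invertible), and L·G = G·(k·Λ + (1/k)·Q₁ + (1/k^2)·Q₂); equivalently G⁻¹·L·G = k·Λ + (1/k)·Q₁ + (1/k^2)·Q₂. -/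
open Complex

/-- The primitive cube root of unity `α = e^{2πi/3}`. -/
noncomputable def αc : ℂ := Complex.exp (2 * Real.pi * Complex.I / 3)

/-- The gauge matrix `G`. -/
noncomputable def Gmat (k : ℂ) : Matrix (Fin 3) (Fin 3) ℂ :=
  !![αc, αc ^ 2, 1;
     αc ^ 2 * k, αc * k, k;
     k ^ 2, k ^ 2, k ^ 2]

/-- The companion-form Lax matrix `L` of the third-order spectral problem. -/
noncomputable def Lmat (p q k : ℂ) : Matrix (Fin 3) (Fin 3) ℂ :=
  !![0, 1, 0;
     0, 0, 1;
     k ^ 3 - q, -p, 0]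

/-- The diagonal matrix `Λ = diag(α, α², 1)`. -/
noncomputable def Λmat : Matrix (Fin 3) (Fin 3) ℂ :=
  Matrix.diagonal ![αc, αc ^ 2, 1]

/-- The perturbation matrix `Q₁`. -/
noncomputable def Q1mat (p : ℂ) : Matrix (Fin 3) (Fin 3) ℂ :=
  (-(p / 3)) • !![αc ^ 2, αc, 1;
                  αc ^ 2, αc, 1;
                  αc ^ 2, αc, 1]

/-- The perturbation matrix `Q₂`. -/
noncomputable def Q2mat (q : ℂ) : Matrix (Fin 3) (Fin 3) ℂ :=
  (-(q / 3)) • !![αc, αc ^ 2, 1;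
                  αc, αc ^ 2, 1;
                  αc, αc ^ 2, 1]

/-!
Up to scalar factors, the columns of `G` are the vectors `(1, ωk, ω²k²)` for `ω = α, α², 1`;
these are eigenvectors, with eigenvalues `ωk`, of the companion matrix of `λ³ = k³`, i.e. of `L`
at `p = q = 0`. Hence `L G = G (kΛ)` up to the `p`, `q` terms, which only affect the last row.
Since `1 + α + α² = 0`, `G` maps `(1, 1, 1)` to `(0, 0, 3k²)`, so `G Q₁` and `G Q₂` are also
supported on the last row, and there they cancel the `p`, `q` terms. The determinant is a
direct expansion, using `α³ = 1` and `α - α² = i√3`.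
-/

open Matrix

lemma αc_eq : αc = -1 / 2 + (Real.sqrt 3 : ℂ) / 2 * I := by
  have hangle : 2 * Real.pi / 3 = Real.pi - Real.pi / 3 := by ring
  have harg : 2 * Real.pi * I / 3 = ((2 * Real.pi / 3 : ℝ) : ℂ) * I := by push_cast; ring
  rw [αc, harg, exp_mul_I, ← ofReal_cos, ← ofReal_sin, hangle, Real.cos_pi_sub,
    Real.sin_pi_sub, Real.cos_pi_div_three, Real.sin_pi_div_three]
  push_cast
  ring

lemma ofReal_sqrt_three_sq : ((Real.sqrt 3 : ℝ) : ℂ) ^ 2 = 3 := by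
  norm_cast
  exact Real.sq_sqrt (by norm_num)

lemma αc_sq_add_αc_add_one : αc ^ 2 + αc + 1 = 0 := by
  rw [αc_eq]
  linear_combination I ^ 2 / 4 * ofReal_sqrt_three_sq + 3 / 4 * I_sq

lemma αc_pow_three : αc ^ 3 = 1 := by
  linear_combination (αc - 1) * αc_sq_add_αc_add_one

lemma αc_sub_αc_sq : αc - αc ^ 2 = Real.sqrt 3 * I := by
  rw [αc_eq]
  linear_combination -I ^ 2 / 4 * ofReal_sqrt_three_sq - 3 / 4 * I_sq

lemma Gmat_det (k : ℂ) : (Gmat k).det = -3 * Real.sqrt 3 * I * k ^ 3 := by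
  rw [det_fin_three]
  simp only [Gmat, of_apply, cons_val', cons_val_zero, cons_val_one, cons_val, cons_val_fin_one]
  linear_combination (-(k ^ 3) * αc) * αc_pow_three + (-3 * k ^ 3) * αc_sub_αc_sq

lemma isUnit_Gmat_det {k : ℂ} (hk : k ≠ 0) : IsUnit (Gmat k).det := by
  have hsqrt : (Real.sqrt 3 : ℂ) ≠ 0 := by exact_mod_cast (Real.sqrt_pos.2 three_pos).ne'
  rw [Gmat_det, isUnit_iff_ne_zero]
  simp [hk, hsqrt, I_ne_zero]

section
variable (k : ℂ)

lemma Lmat_mul_Gmat (p q : ℂ) :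
    Lmat p q k * Gmat k = Gmat k * (k • Λmat) -
      ((p * k) • vecMulVec (Pi.single 2 1) ![αc ^ 2, αc, 1] +
        q • vecMulVec (Pi.single 2 1) ![αc, αc ^ 2, 1]) := by
  ext i j
  fin_cases i <;> fin_cases j <;>
    simp [Lmat, Gmat, Λmat, vecMul_diagonal, Matrix.mul_apply, Fin.sum_univ_three] <;>
    grind [αc_pow_three]

lemma Gmat_mul_Q1mat (p : ℂ) :
    Gmat k * Q1mat p = -(p * k ^ 2) • vecMulVec (Pi.single 2 1) ![αc ^ 2, αc, 1] := by
  ext i j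
  fin_cases i <;> fin_cases j <;>
    simp [Q1mat, Gmat, Matrix.mul_apply, Fin.sum_univ_three] <;>
    grind [αc_sq_add_αc_add_one]

lemma Gmat_mul_Q2mat (q : ℂ) :
    Gmat k * Q2mat q = -(q * k ^ 2) • vecMulVec (Pi.single 2 1) ![αc, αc ^ 2, 1] := by
  ext i j
  fin_cases i <;> fin_cases j <;>
    simp [Q2mat, Gmat, Matrix.mul_apply, Fin.sum_univ_three] <;>
    grind [αc_sq_add_αc_add_one]

end

/-- `det G = −3√3·i·k³`, and the gauge transformation conjugates `L` into
`kΛ + Q₁/k + Q₂/k²`. -/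
theorem gauge_transformation (k p q : ℂ) (hk : k ≠ 0) :
    (Gmat k).det = -3 * (Real.sqrt 3 : ℂ) * Complex.I * k ^ 3 ∧
    Lmat p q k * Gmat k
      = Gmat k * (k • Λmat + k⁻¹ • Q1mat p + (k ^ 2)⁻¹ • Q2mat q) ∧
    (Gmat k)⁻¹ * Lmat p q k * Gmat k
      = k • Λmat + k⁻¹ • Q1mat p + (k ^ 2)⁻¹ • Q2mat q := by
  have hscale₁ : k⁻¹ * -(p * k ^ 2) = -(p * k) := by field_simp
  have hscale₂ : (k ^ 2)⁻¹ * -(q * k ^ 2) = -q := by field_simp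
  have hLG : Lmat p q k * Gmat k
      = Gmat k * (k • Λmat + k⁻¹ • Q1mat p + (k ^ 2)⁻¹ • Q2mat q) := by
    simp only [Lmat_mul_Gmat, Matrix.mul_add, Matrix.mul_smul, Gmat_mul_Q1mat, Gmat_mul_Q2mat,
      smul_smul, hscale₁, hscale₂]
    module
  refine ⟨Gmat_det k, hLG, ?_⟩
  rw [Matrix.mul_assoc, hLG, nonsing_inv_mul_cancel_left _ _ (isUnit_Gmat_det hk)]
end
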